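/- arXiv:1305.2082 — 2 statements merged into one kernel-verified Lean document; each statement's English description precedes it below -/
import Mathlib

section
/- If y is a function with |y(t)| ≤ λ for all t ∈ Λ_a (λ > 0 constant), then |Ω_y^n 1 (t)| ≤ Ω_λ^n 1 (t) for all n ∈ ℕ and t ∈ Λ_a. -/
noncomputable section

open Real Filter Topology

/-- q-factorial function (t-s)_q^α for real exponent α. -/
def qFact (q t s α : ℝ) : ℝ :=
  t ^ α * ∏' i : ℕ, (1 - s / t * q ^ (i : ℝ)) / (1 - s / t * q ^ ((i : ℝ) + α))

/-- q-gamma function Γ_q(α) = (1-q)_q^{α-1} (1-q)^{1-α}. -/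
def qGamma (q α : ℝ) : ℝ :=
  (∏' i : ℕ, (1 - q ^ ((i : ℝ) + 1)) / (1 - q ^ ((i : ℝ) + α))) * (1 - q) ^ (1 - α)

/-- nabla q-integral from 0 to t. -/
def qInt (q : ℝ) (f : ℝ → ℝ) (t : ℝ) : ℝ :=
  (1 - q) * t * ∑' i : ℕ, q ^ i * f (t * q ^ i)

/-- nabla q-integral from a to t. -/
def qIntI (q : ℝ) (f : ℝ → ℝ) (a t : ℝ) : ℝ := qInt q f t - qInt q f a

/-- nabla q-derivative. -/
def qDeriv (q : ℝ) (f : ℝ → ℝ) (t : ℝ) : ℝ := (f t - f (q * t)) / ((1 - q) * t)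

/-- left q-fractional integral of order α starting at a. -/
def qFracInt (q α a : ℝ) (f : ℝ → ℝ) (t : ℝ) : ℝ :=
  (1 / qGamma q α) * qIntI q (fun s => qFact q t (q * s) (α - 1) * f s) a t

/-- Caputo left q-fractional derivative of order 0 < α ≤ 1. -/
def qCaputo (q α a : ℝ) (f : ℝ → ℝ) (t : ℝ) : ℝ :=
  qFracInt q (1 - α) a (qDeriv q f) t

/-- q-Mittag-Leffler function E_{α,β}(λ, z - z₀). -/
def qML (q α β lam z z₀ : ℝ) : ℝ :=
  ∑' k : ℕ, lam ^ k * qFact q z z₀ (α * k) / qGamma q (α * k + β)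

/-- the operator Ω_x φ = ∇_a^{-α}(x·φ). -/
def qOmega (q α a : ℝ) (x : ℝ → ℝ) (φ : ℝ → ℝ) : ℝ → ℝ :=
  qFracInt q α a (fun s => x s * φ s)

/-- Λ_a = {a, a/q, a/q², …}. -/
def qLambda (q a : ℝ) : Set ℝ := {t | ∃ n : ℕ, t = a / q ^ n}

/-- q-factorial function with natural exponent. -/
def qFactN (q t a : ℝ) (k : ℕ) : ℝ := ∏ i ∈ Finset.range k, (t - q ^ i * a)


namespace QOmegaHelpers

lemma hasProd_zero_of_eq_zero {f : ℕ → ℝ} (b : ℕ) (h : f b = 0) : HasProd f 0 := by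
  have h1 : (fun _ : Finset ℕ => (0:ℝ)) =ᶠ[atTop] fun s => ∏ i ∈ s, f i := by
    filter_upwards [eventually_ge_atTop ({b} : Finset ℕ)] with s hs
    exact (Finset.prod_eq_zero (hs (Finset.mem_singleton_self b)) h).symm
  exact tendsto_const_nhds.congr' h1

lemma tprod_nonneg' {f : ℕ → ℝ} (h : ∀ i, 0 ≤ f i) : 0 ≤ ∏' i, f i := by
  by_cases hm : Multipliable f
  · exact ge_of_tendsto' hm.hasProd (fun s => Finset.prod_nonneg fun i _ => h i)
  · rw [tprod_eq_one_of_not_multipliable hm]; exact zero_le_one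

lemma tprod_le_const' {f : ℕ → ℝ} {B : ℝ} (hB : 1 ≤ B)
    (h : ∀ s : Finset ℕ, ∏ i ∈ s, f i ≤ B) : ∏' i, f i ≤ B := by
  by_cases hm : Multipliable f
  · exact le_of_tendsto' hm.hasProd h
  · rw [tprod_eq_one_of_not_multipliable hm]; exact hB

lemma qFact_eq_zero {q t s : ℝ} (hq : 0 < q) (β : ℝ) (d : ℕ)
    (h : s / t = (q ^ d)⁻¹) : qFact q t s β = 0 := by
  unfold qFact
  have hz : (1 - s / t * q ^ ((d : ℕ) : ℝ)) / (1 - s / t * q ^ (((d : ℕ) : ℝ) + β)) = 0 := by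
    rw [h, Real.rpow_natCast, inv_mul_cancel₀ (pow_ne_zero _ hq.ne'), sub_self, zero_div]
  rw [(hasProd_zero_of_eq_zero d hz).tprod_eq, mul_zero]

lemma qFact_node {q α t : ℝ} (hq0 : 0 < q) (hq1 : q < 1) (hα0 : 0 < α)
    (ht : 0 < t) (c : ℕ) :
    0 ≤ qFact q t (t * q^(c+1)) (α-1) ∧
    qFact q t (t * q^(c+1)) (α-1) ≤
      t^(α-1) * Real.exp ((1 - q^α)⁻¹ * (1-q)⁻¹) := by
  have hqα : q ^ α < 1 := Real.rpow_lt_one hq0.le hq1 hα0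
  have hc' : (0:ℝ) < 1 - q ^ α := by linarith
  set c' : ℝ := (1 - q^α)⁻¹ with hc'def
  have hc'0 : 0 ≤ c' := by positivity
  have hr : (t * q^(c+1)) / t = q^(c+1) := mul_div_cancel_left₀ _ ht.ne'
  set F : ℕ → ℝ := fun i =>
    (1 - (t * q^(c+1)) / t * q ^ (i : ℝ)) / (1 - (t * q^(c+1)) / t * q ^ ((i : ℝ) + (α-1)))
      with hF
  have hden : ∀ i : ℕ, 1 - (t * q^(c+1)) / t * q ^ ((i : ℝ) + (α-1))
      = 1 - q ^ (((c+i : ℕ) : ℝ) + α) := by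
    intro i
    rw [hr, ← Real.rpow_natCast q (c+1), ← Real.rpow_add hq0]
    congr 2
    push_cast; ring
  have hdenpos : ∀ i : ℕ, 0 < 1 - q ^ (((c+i : ℕ) : ℝ) + α) := by
    intro i
    have : q ^ (((c+i : ℕ) : ℝ) + α) < 1 :=
      Real.rpow_lt_one hq0.le hq1 (by positivity)
    linarith
  have hnum : ∀ i : ℕ, 1 - (t * q^(c+1)) / t * q ^ (i : ℝ) = 1 - q ^ (c+1+i) := by
    intro i
    rw [hr, Real.rpow_natCast, ← pow_add]
  have hnumpos : ∀ i : ℕ, 0 < 1 - q ^ (c+1+i) := by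
    intro i
    have := pow_lt_one₀ hq0.le hq1 (by omega : c+1+i ≠ 0)
    linarith
  have hF0 : ∀ i, 0 ≤ F i := by
    intro i
    rw [hF]
    simp only
    rw [hnum i, hden i]
    exact div_nonneg (hnumpos i).le (hdenpos i).le
  have hFle : ∀ i : ℕ, F i ≤ 1 + q^i * c' := by
    intro i
    rw [hF]; simp only
    rw [hnum i, hden i]
    rw [div_le_iff₀ (hdenpos i)]
    have h1 : q ^ (((c+i : ℕ) : ℝ) + α) ≤ q ^ α :=
      Real.rpow_le_rpow_of_exponent_ge hq0 hq1.le (le_add_of_nonneg_left (Nat.cast_nonneg _))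
    have h2 : q ^ (((c+i : ℕ) : ℝ) + α) ≤ q ^ (i:ℕ) := by
      rw [← Real.rpow_natCast q i]
      exact Real.rpow_le_rpow_of_exponent_ge hq0 hq1.le (by push_cast; linarith)
    have h3 : (0:ℝ) ≤ q ^ (c+1+i) := by positivity
    have h4 : (0:ℝ) ≤ q ^ i := by positivity
    have h5 : c' * (1 - q^α) = 1 := inv_mul_cancel₀ hc'.ne'
    have h6 : 1 ≤ c' * (1 - q ^ (((c+i:ℕ):ℝ) + α)) := by nlinarith
    nlinarith [mul_le_mul_of_nonneg_left h6 h4]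
  constructor
  · exact mul_nonneg (Real.rpow_nonneg ht.le _) (tprod_nonneg' hF0)
  · have hB1 : 1 ≤ Real.exp (c' * (1-q)⁻¹) := by
      rw [Real.one_le_exp_iff]
      have h7 : (0:ℝ) ≤ (1-q)⁻¹ := by
        have : (0:ℝ) < 1 - q := by linarith
        positivity
      exact mul_nonneg hc'0 h7
    have hbound : ∀ s : Finset ℕ, ∏ i ∈ s, F i ≤ Real.exp (c' * (1-q)⁻¹) := by
      intro s
      calc ∏ i ∈ s, F i ≤ ∏ i ∈ s, Real.exp (q^i * c') := by
            apply Finset.prod_le_prod (fun i _ => hF0 i)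
            intro i _
            calc F i ≤ 1 + q^i * c' := hFle i
              _ ≤ Real.exp (q^i * c') := by
                  have := Real.add_one_le_exp (q^i * c'); linarith
        _ = Real.exp (∑ i ∈ s, q^i * c') := (Real.exp_sum s _).symm
        _ ≤ Real.exp (c' * (1-q)⁻¹) := by
            apply Real.exp_le_exp.mpr
            have hsum : ∑ i ∈ s, q^i * c' = (∑ i ∈ s, q^i) * c' := by
              rw [Finset.sum_mul]
            rw [hsum, mul_comm]
            apply mul_le_mul_of_nonneg_left _ hc'0
            calc ∑ i ∈ s, q^i ≤ ∑' i : ℕ, q^i :=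
                  Summable.sum_le_tsum s (fun i _ => by positivity)
                    (summable_geometric_of_lt_one hq0.le hq1)
              _ = (1-q)⁻¹ := tsum_geometric_of_lt_one hq0.le hq1
    unfold qFact
    rw [← hF]
    exact mul_le_mul_of_nonneg_left (tprod_le_const' hB1 hbound)
      (Real.rpow_nonneg ht.le _)

variable {q α a : ℝ}

lemma node_eq (hq0 : 0 < q) (n i : ℕ) :
    a / q ^ n * q ^ (i + n) = a * q ^ i := by
  field_simp
  ring

lemma qIntI_eq_sum (hq0 : 0 < q) (f : ℝ → ℝ) (n : ℕ) {t : ℝ} (ht : t = a / q ^ n)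
    (hs : Summable fun i : ℕ => q ^ i * f (a * q ^ i)) :
    qIntI q f a t
      = (1 - q) * t * ∑ i ∈ Finset.range n, q ^ i * f (t * q ^ i) := by
  subst ht; set t := a / q ^ n with htdef
  set g : ℕ → ℝ := fun i => q ^ i * f (t * q ^ i) with hg
  set h : ℕ → ℝ := fun i => q ^ i * f (a * q ^ i) with hh
  have htail : ∀ i : ℕ, g (i + n) = q ^ n * h i := by
    intro i
    simp only [hg, hh]
    rw [node_eq hq0 n i, pow_add]
    ring
  have hgsum : Summable g := by
    rw [← summable_nat_add_iff n]
    exact (funext htail : (fun i => g (i+n)) = fun i => q^n * h i) ▸ hs.mul_left (q^n)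
  have hsplit : ∑' i, g i = (∑ i ∈ Finset.range n, g i) + q ^ n * ∑' i, h i := by
    rw [← Summable.sum_add_tsum_nat_add n hgsum]
    congr 1
    rw [← tsum_mul_left]
    exact tsum_congr htail
  have htq : t * q ^ n = a := div_mul_cancel₀ a (pow_ne_zero n hq0.ne')
  have h1 : qInt q f t = (1 - q) * t * ((∑ i ∈ Finset.range n, g i) + q ^ n * ∑' i, h i) := by
    rw [qInt, ← hsplit]
  have h2 : qInt q f a = (1 - q) * a * ∑' i, h i := rfl
  rw [qIntI, h1, h2]
  have : ∑ i ∈ Finset.range n, g i = ∑ i ∈ Finset.range n, q ^ i * f (t * q ^ i) := rfl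
  rw [this]
  linear_combination ((1-q) * ∑' i, h i) * htq

lemma qIntI_eq_zero_of_not (hq0 : 0 < q) (f : ℝ → ℝ) (n : ℕ) {t : ℝ} (ht : t = a / q ^ n)
    (hs : ¬ Summable fun i : ℕ => q ^ i * f (a * q ^ i)) :
    qIntI q f a t = 0 := by
  subst ht; set t := a / q ^ n with htdef
  set g : ℕ → ℝ := fun i => q ^ i * f (t * q ^ i) with hg
  set h : ℕ → ℝ := fun i => q ^ i * f (a * q ^ i) with hh
  have htail : ∀ i : ℕ, g (i + n) = q ^ n * h i := by
    intro i
    simp only [hg, hh]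
    rw [node_eq hq0 n i, pow_add]
    ring
  have hgsum : ¬ Summable g := by
    intro hgs
    apply hs
    have : Summable fun i => g (i + n) := (summable_nat_add_iff n).mpr hgs
    rw [funext htail] at this
    exact (summable_mul_left_iff (pow_ne_zero n hq0.ne')).mp this
  have h1 : qInt q f t = (1 - q) * t * ∑' i, g i := rfl
  have h2 : qInt q f a = (1 - q) * a * ∑' i, h i := rfl
  rw [qIntI, h1, h2, tsum_eq_zero_of_not_summable hgsum, tsum_eq_zero_of_not_summable hs]
  ring

lemma qIntI_low_zero (f : ℝ → ℝ) (j : ℕ)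
    (hf : ∀ i < j, f (a * q ^ i) = 0) :
    qIntI q f a (a * q ^ j) = 0 := by
  set g : ℕ → ℝ := fun i => q ^ i * f (a * q ^ j * q ^ i) with hg
  set h : ℕ → ℝ := fun i => q ^ i * f (a * q ^ i) with hh
  have htail : ∀ i : ℕ, h (i + j) = q ^ j * g i := by
    intro i
    simp only [hg, hh]
    rw [mul_assoc, ← pow_add, pow_add q i j]
    ring_nf
  have h1 : qInt q f (a * q ^ j) = (1 - q) * (a * q ^ j) * ∑' i, g i := rfl
  have h2 : qInt q f a = (1 - q) * a * ∑' i, h i := rfl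
  by_cases hsh : Summable h
  · have hsplit : ∑' i, h i = (∑ i ∈ Finset.range j, h i) + q ^ j * ∑' i, g i := by
      rw [← Summable.sum_add_tsum_nat_add j hsh]
      congr 1
      rw [← tsum_mul_left]
      exact tsum_congr htail
    have hhead : ∑ i ∈ Finset.range j, h i = 0 := by
      apply Finset.sum_eq_zero
      intro i hi
      simp only [hh]
      rw [hf i (Finset.mem_range.mp hi), mul_zero]
    rw [qIntI, h1, h2, hsplit, hhead]
    ring
  · have hgs : ¬ Summable g := by
      intro hgs
      apply hsh
      rw [← summable_nat_add_iff j, funext htail]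
      exact hgs.mul_left _
    rw [qIntI, h1, h2, tsum_eq_zero_of_not_summable hgs, tsum_eq_zero_of_not_summable hsh]
    ring

lemma qGamma_nonneg (hq0 : 0 < q) (hq1 : q < 1) (hα0 : 0 < α) : 0 ≤ qGamma q α := by
  unfold qGamma
  apply mul_nonneg
  · apply tprod_nonneg'
    intro i
    apply div_nonneg
    · have : q ^ ((i:ℝ) + 1) < 1 := Real.rpow_lt_one hq0.le hq1 (by positivity)
      linarith
    · have : q ^ ((i:ℝ) + α) < 1 := Real.rpow_lt_one hq0.le hq1 (by positivity)
      linarith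
  · exact Real.rpow_nonneg (by linarith) _

lemma qFracInt_low_zero (hq0 : 0 < q) (ha0 : 0 < a) (g : ℝ → ℝ) (j : ℕ) :
    qFracInt q α a g (a * q ^ j) = 0 := by
  unfold qFracInt
  rw [qIntI_low_zero _ j ?_, mul_zero]
  intro i hij
  rw [qFact_eq_zero hq0 (α-1) (j-(i+1)) ?_, zero_mul]
  have h1 : q * (a * q ^ i) = a * q ^ (i+1) := by ring
  rw [h1, div_eq_iff (by positivity), inv_mul_eq_div, eq_div_iff (by positivity),
    mul_assoc, ← pow_add]
  congr 2
  omega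

lemma node_mem (hq0 : 0 < q) (k i : ℕ) (hik : i ≤ k) :
    a / q ^ k * q ^ i = a / q ^ (k - i) := by
  rw [div_mul_eq_mul_div, div_eq_div_iff (by positivity) (by positivity),
    mul_assoc, ← pow_add]
  have : i + (k - i) = k := by omega
  rw [this]

end QOmegaHelpers

open QOmegaHelpers in
theorem qOmega_iterate_abs_le (q α a lam : ℝ) (y : ℝ → ℝ) (n : ℕ)
    (hq0 : 0 < q) (hq1 : q < 1) (hα0 : 0 < α) (hα1 : α ≤ 1)
    (ha : ∃ m : ℤ, a = q ^ m) (ha0 : 0 < a) (hlam : 0 < lam)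
    (hy : ∀ t ∈ qLambda q a, |y t| ≤ lam) :
    ∀ t ∈ qLambda q a,
      |(qOmega q α a y)^[n] (fun _ => (1 : ℝ)) t|
        ≤ (qOmega q α a fun _ => lam)^[n] (fun _ => (1 : ℝ)) t := by
  have hΓ : 0 ≤ 1 / qGamma q α := one_div_nonneg.mpr (qGamma_nonneg hq0 hq1 hα0)
  have h1q : (0:ℝ) ≤ 1 - q := by linarith
  induction n with
  | zero => intro t ht; simp
  | succ m IH =>
    intro t ht
    obtain ⟨k, rfl⟩ := ht
    set t := a / q ^ k with htdef
    have ht0 : 0 < t := by positivity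
    rw [Function.iterate_succ_apply', Function.iterate_succ_apply']
    simp only [qOmega, qFracInt]
    set φ : ℝ → ℝ := (qOmega q α a y)^[m] (fun _ => (1:ℝ)) with hφ
    set ψ : ℝ → ℝ := (qOmega q α a fun _ => lam)^[m] (fun _ => (1:ℝ)) with hψ
    -- kernel facts at nodes
    have hker : ∀ i : ℕ, 0 ≤ qFact q t (q * (t * q ^ i)) (α - 1) ∧
        qFact q t (q * (t * q ^ i)) (α - 1) ≤
          t^(α-1) * Real.exp ((1 - q^α)⁻¹ * (1-q)⁻¹) := by
      intro i
      have : q * (t * q ^ i) = t * q ^ (i+1) := by ring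
      rw [this]
      exact qFact_node hq0 hq1 hα0 ht0 i
    -- ψ values at nodes are ≥ |φ| there (induction hypothesis)
    have hnodes : ∀ i : ℕ, i ≤ k → t * q ^ i ∈ qLambda q a := by
      intro i hik
      exact ⟨k - i, node_mem hq0 k i hik⟩
    -- λ-side summability
    have hSl : Summable fun i : ℕ =>
        q ^ i * (qFact q t (q * (a * q ^ i)) (α - 1) * (lam * ψ (a * q ^ i))) := by
      cases m with
      | zero =>
        simp only [hψ, Function.iterate_zero, id_eq]
        apply Summable.of_nonneg_of_le (f := fun i : ℕ =>
            (t^(α-1) * Real.exp ((1 - q^α)⁻¹ * (1-q)⁻¹) * lam) * q ^ i)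
        · intro i
          have hnode : q * (a * q ^ i) = t * q ^ (k + i + 1) := by
            have := node_eq (a := a) hq0 k (i+1)
            rw [htdef]
            rw [show k + i + 1 = (i+1) + k by omega, this]
            ring
          rw [hnode]
          have := (qFact_node hq0 hq1 hα0 ht0 (k+i)).1
          rw [show k + i + 1 = (k+i) + 1 by omega]
          positivity
        · intro i
          have hnode : q * (a * q ^ i) = t * q ^ ((k + i) + 1) := by
            have := node_eq (a := a) hq0 k (i+1)
            rw [htdef]
            rw [show (k + i) + 1 = (i+1) + k by omega, this]
            ring
          rw [hnode, mul_one]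
          have hb := qFact_node hq0 hq1 hα0 ht0 (k+i)
          have hqi : (0:ℝ) ≤ q ^ i := by positivity
          calc q ^ i * (qFact q t (t * q^((k+i)+1)) (α-1) * lam)
              ≤ q ^ i * (t^(α-1) * Real.exp ((1 - q^α)⁻¹ * (1-q)⁻¹) * lam) := by
                apply mul_le_mul_of_nonneg_left _ hqi
                exact mul_le_mul_of_nonneg_right hb.2 hlam.le
            _ = (t^(α-1) * Real.exp ((1 - q^α)⁻¹ * (1-q)⁻¹) * lam) * q ^ i := by ring
        · exact (summable_geometric_of_lt_one hq0.le hq1).mul_left _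
      | succ m' =>
        apply summable_of_ne_finset_zero (s := Finset.range 1)
        intro i hi
        have hi1 : 1 ≤ i := by
          simp only [Finset.mem_range, not_lt] at hi; omega
        have hzero : ψ (a * q ^ i) = 0 := by
          rw [hψ, Function.iterate_succ_apply']
          exact qFracInt_low_zero hq0 ha0 _ i
        rw [hzero]
        ring
    -- ψ at goal point via the finite-sum formula
    have hRHS : qIntI q
          (fun s => qFact q t (q * s) (α - 1) * ((fun _ => lam) s * ψ s)) a t
        = (1 - q) * t *
          ∑ i ∈ Finset.range k, q ^ i *
            (qFact q t (q * (t * q ^ i)) (α - 1) * (lam * ψ (t * q ^ i))) :=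
      qIntI_eq_sum hq0 _ k htdef hSl
    -- termwise comparison data
    have hterm : ∀ i ∈ Finset.range k,
        |q ^ i * (qFact q t (q * (t * q ^ i)) (α - 1) * (y (t * q ^ i) * φ (t * q ^ i)))|
          ≤ q ^ i * (qFact q t (q * (t * q ^ i)) (α - 1) * (lam * ψ (t * q ^ i))) := by
      intro i hi
      have hik : i ≤ k := (Finset.mem_range.mp hi).le
      have hmem := hnodes i hik
      have hK := (hker i).1
      have hyb := hy _ hmem
      have hφb := IH _ hmem
      rw [abs_mul, abs_mul, abs_of_nonneg (by positivity : (0:ℝ) ≤ q ^ i),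
        abs_of_nonneg hK, abs_mul]
      apply mul_le_mul_of_nonneg_left _ (by positivity : (0:ℝ) ≤ q ^ i)
      apply mul_le_mul_of_nonneg_left _ hK
      exact mul_le_mul hyb hφb (abs_nonneg _) hlam.le
    have htermpos : ∀ i ∈ Finset.range k,
        0 ≤ q ^ i * (qFact q t (q * (t * q ^ i)) (α - 1) * (lam * ψ (t * q ^ i))) := by
      intro i hi
      exact (abs_nonneg _).trans (hterm i hi)
    rw [hRHS]
    by_cases hSy : Summable fun i : ℕ =>
        q ^ i * (qFact q t (q * (a * q ^ i)) (α - 1) * (y (a * q ^ i) * φ (a * q ^ i)))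
    · have hLHS : qIntI q (fun s => qFact q t (q * s) (α - 1) * (y s * φ s)) a t
          = (1 - q) * t *
            ∑ i ∈ Finset.range k, q ^ i *
              (qFact q t (q * (t * q ^ i)) (α - 1) * (y (t * q ^ i) * φ (t * q ^ i))) :=
        qIntI_eq_sum hq0 _ k htdef hSy
      rw [hLHS, abs_mul, abs_of_nonneg hΓ]
      apply mul_le_mul_of_nonneg_left _ hΓ
      rw [abs_mul, abs_mul, abs_of_nonneg h1q, abs_of_nonneg ht0.le, mul_assoc, mul_assoc]
      apply mul_le_mul_of_nonneg_left _ h1q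
      apply mul_le_mul_of_nonneg_left _ ht0.le
      calc |∑ i ∈ Finset.range k, q ^ i *
              (qFact q t (q * (t * q ^ i)) (α - 1) * (y (t * q ^ i) * φ (t * q ^ i)))|
          ≤ ∑ i ∈ Finset.range k, |q ^ i *
              (qFact q t (q * (t * q ^ i)) (α - 1) * (y (t * q ^ i) * φ (t * q ^ i)))| :=
            Finset.abs_sum_le_sum_abs _ _
        _ ≤ ∑ i ∈ Finset.range k, q ^ i *
              (qFact q t (q * (t * q ^ i)) (α - 1) * (lam * ψ (t * q ^ i))) :=
            Finset.sum_le_sum hterm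
    · have hLHS : qIntI q (fun s => qFact q t (q * s) (α - 1) * (y s * φ s)) a t = 0 :=
        qIntI_eq_zero_of_not hq0 _ k htdef hSy
      rw [hLHS, mul_zero, abs_zero]
      have : 0 ≤ ∑ i ∈ Finset.range k, q ^ i *
          (qFact q t (q * (t * q ^ i)) (α - 1) * (lam * ψ (t * q ^ i))) :=
        Finset.sum_nonneg htermpos
      positivity
end
end

section
/- For 0 < q < 1 and 0 < α ≤ 1, the series ∑_{k=1}^∞ t^{kα}/Γ_q(kα+1) converges for 0 < t ≤ 1; in particular, the ratio Γ_q((k−1)α+1)/Γ_q(kα+1) tends to (1−q)^α < 1 as k → ∞. -/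
/-!
Since `Γ_q(β) = (q; q)_∞ / (q^β; q)_∞ · (1 - q)^(1 - β)`, everything reduces to the infinite
q-Pochhammer symbol `(q^β; q)_∞`. It lies in `(0, 1]`, and it tends to `1` as `β → ∞` because
its logarithm `∑ log (1 - q^(i + β))` is squeezed between `-q^β / ((1 - q^β)(1 - q))` and `0`.
The first fact gives the geometric bound `1 / Γ_q(kα + 1) ≤ (1 - q)^(kα) / (q; q)_∞`, the second
gives `Γ_q(β) / Γ_q(β + α) → (1 - q)^α` as `β → ∞`.
-/

noncomputable section

open Real Filter Topology

/-- The infinite q-Pochhammer symbol `(q^β; q)_∞`. -/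
def qPochhammerInf (q β : ℝ) : ℝ := ∏' i : ℕ, (1 - q ^ ((i : ℝ) + β))

section qPochhammerInf

variable {q β : ℝ}

lemma rpow_natCast_add (hq0 : 0 < q) (i : ℕ) : q ^ ((i : ℝ) + β) = q ^ β * q ^ i := by
  rw [Real.rpow_add hq0, Real.rpow_natCast, mul_comm]

lemma one_sub_rpow_natCast_add_pos (hq0 : 0 < q) (hq1 : q < 1) (hβ : 0 < β) (i : ℕ) :
    0 < 1 - q ^ ((i : ℝ) + β) := by
  have : q ^ ((i : ℝ) + β) < 1 := Real.rpow_lt_one hq0.le hq1 (by positivity)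
  linarith

lemma summable_log_one_sub_rpow (hq0 : 0 < q) (hq1 : q < 1) :
    Summable fun i : ℕ => Real.log (1 - q ^ ((i : ℝ) + β)) := by
  have hgeom : Summable fun i : ℕ => -(q ^ β * q ^ i) :=
    ((summable_geometric_of_lt_one hq0.le hq1).mul_left _).neg
  simpa only [rpow_natCast_add hq0, ← sub_eq_add_neg] using
    Real.summable_log_one_add_of_summable hgeom

lemma qPochhammerInf_eq_exp (hq0 : 0 < q) (hq1 : q < 1) (hβ : 0 < β) :
    qPochhammerInf q β = Real.exp (∑' i : ℕ, Real.log (1 - q ^ ((i : ℝ) + β))) :=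
  (Real.rexp_tsum_eq_tprod (one_sub_rpow_natCast_add_pos hq0 hq1 hβ)
    (summable_log_one_sub_rpow hq0 hq1)).symm

lemma qPochhammerInf_pos (hq0 : 0 < q) (hq1 : q < 1) (hβ : 0 < β) : 0 < qPochhammerInf q β := by
  rw [qPochhammerInf_eq_exp hq0 hq1 hβ]
  exact Real.exp_pos _

lemma tsum_log_one_sub_rpow_nonpos (hq0 : 0 < q) (hq1 : q < 1) (hβ : 0 < β) :
    ∑' i : ℕ, Real.log (1 - q ^ ((i : ℝ) + β)) ≤ 0 :=
  tsum_nonpos fun i => Real.log_nonpos (one_sub_rpow_natCast_add_pos hq0 hq1 hβ i).le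
    (by linarith [Real.rpow_nonneg hq0.le ((i : ℝ) + β)])

lemma qPochhammerInf_le_one (hq0 : 0 < q) (hq1 : q < 1) (hβ : 0 < β) : qPochhammerInf q β ≤ 1 := by
  rw [qPochhammerInf_eq_exp hq0 hq1 hβ, Real.exp_le_one_iff]
  exact tsum_log_one_sub_rpow_nonpos hq0 hq1 hβ

lemma neg_le_tsum_log_one_sub_rpow (hq0 : 0 < q) (hq1 : q < 1) (hβ : 0 < β) :
    -(q ^ β / (1 - q ^ β) * (1 - q)⁻¹) ≤ ∑' i : ℕ, Real.log (1 - q ^ ((i : ℝ) + β)) := by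
  have hqβ : q ^ β < 1 := Real.rpow_lt_one hq0.le hq1 hβ
  -- `log y ≥ 1 - y⁻¹` at `y = 1 - x` gives `-log (1 - x) ≤ x / (1 - x) ≤ x / (1 - q ^ β)`
  have hterm (i : ℕ) : -(q ^ β / (1 - q ^ β) * q ^ i) ≤ Real.log (1 - q ^ ((i : ℝ) + β)) := by
    have hpos := one_sub_rpow_natCast_add_pos hq0 hq1 hβ i
    refine le_trans ?_ (Real.one_sub_inv_le_log_of_pos hpos)
    rw [rpow_natCast_add hq0] at hpos ⊢
    have hqi : q ^ i ≤ 1 := pow_le_one₀ hq0.le hq1.le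
    have hx : 1 - q ^ β ≤ 1 - q ^ β * q ^ i := by
      nlinarith [Real.rpow_nonneg hq0.le β]
    calc -(q ^ β / (1 - q ^ β) * q ^ i) = -(q ^ β * q ^ i / (1 - q ^ β)) := by ring
      _ ≤ -(q ^ β * q ^ i / (1 - q ^ β * q ^ i)) :=
        neg_le_neg (div_le_div_of_nonneg_left (by positivity) (by linarith) hx)
      _ = 1 - (1 - q ^ β * q ^ i)⁻¹ := by field_simp; ring
  have hgeom := (summable_geometric_of_lt_one hq0.le hq1).mul_left (q ^ β / (1 - q ^ β))
  calc -(q ^ β / (1 - q ^ β) * (1 - q)⁻¹)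
      = ∑' i : ℕ, -(q ^ β / (1 - q ^ β) * q ^ i) := by
        rw [tsum_neg, tsum_mul_left, tsum_geometric_of_lt_one hq0.le hq1]
    _ ≤ _ := hgeom.neg.tsum_le_tsum hterm (summable_log_one_sub_rpow hq0 hq1)

lemma tendsto_qPochhammerInf_atTop (hq0 : 0 < q) (hq1 : q < 1) :
    Tendsto (qPochhammerInf q) atTop (𝓝 1) := by
  have hqβ : Tendsto (fun β : ℝ => q ^ β) atTop (𝓝 0) :=
    tendsto_rpow_atTop_of_base_lt_one q (by linarith) hq1
  have hlower : Tendsto (fun β : ℝ => -(q ^ β / (1 - q ^ β) * (1 - q)⁻¹)) atTop (𝓝 0) := by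
    simpa using ((hqβ.div (tendsto_const_nhds.sub hqβ) (by simp)).mul_const (1 - q)⁻¹).neg
  have hlog : Tendsto (fun β : ℝ => ∑' i : ℕ, Real.log (1 - q ^ ((i : ℝ) + β))) atTop (𝓝 0) :=
    tendsto_of_tendsto_of_tendsto_of_le_of_le' hlower tendsto_const_nhds
      (eventually_gt_atTop 0 |>.mono fun _ hβ => neg_le_tsum_log_one_sub_rpow hq0 hq1 hβ)
      (eventually_gt_atTop 0 |>.mono fun _ hβ => tsum_log_one_sub_rpow_nonpos hq0 hq1 hβ)
  rw [← Real.exp_zero]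
  exact (Real.continuous_exp.tendsto 0 |>.comp hlog).congr'
    (eventually_gt_atTop 0 |>.mono fun _ hβ => (qPochhammerInf_eq_exp hq0 hq1 hβ).symm)

lemma qGamma_eq_qPochhammerInf (hq0 : 0 < q) (hq1 : q < 1) (hβ : 0 < β) :
    qGamma q β = qPochhammerInf q 1 / qPochhammerInf q β * (1 - q) ^ (1 - β) := by
  have hmult {γ : ℝ} (hγ : 0 < γ) : Multipliable fun i : ℕ => 1 - q ^ ((i : ℝ) + γ) :=
    Real.multipliable_of_summable_log (one_sub_rpow_natCast_add_pos hq0 hq1 hγ)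
      (summable_log_one_sub_rpow hq0 hq1)
  rw [qGamma, (hmult one_pos).tprod_div₀ (hmult hβ) (qPochhammerInf_pos hq0 hq1 hβ).ne',
    qPochhammerInf, qPochhammerInf]

end qPochhammerInf

section qGamma

variable {q : ℝ}

lemma qGamma_pos (hq0 : 0 < q) (hq1 : q < 1) {β : ℝ} (hβ : 0 < β) : 0 < qGamma q β := by
  have := qPochhammerInf_pos hq0 hq1 hβ
  have := qPochhammerInf_pos hq0 hq1 one_pos
  rw [qGamma_eq_qPochhammerInf hq0 hq1 hβ]
  exact mul_pos (by positivity) (Real.rpow_pos_of_pos (by linarith) _)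

lemma inv_qGamma_le (hq0 : 0 < q) (hq1 : q < 1) {β : ℝ} (hβ : 0 < β) :
    (qGamma q β)⁻¹ ≤ (qPochhammerInf q 1)⁻¹ * (1 - q) ^ (β - 1) := by
  rw [qGamma_eq_qPochhammerInf hq0 hq1 hβ, mul_inv, inv_div, ← Real.rpow_neg (by linarith),
    neg_sub, div_eq_inv_mul]
  exact mul_le_mul_of_nonneg_right (mul_le_of_le_one_right
    (inv_pos.2 (qPochhammerInf_pos hq0 hq1 one_pos)).le (qPochhammerInf_le_one hq0 hq1 hβ))
    (Real.rpow_nonneg (by linarith) _)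

lemma qGamma_div_qGamma (hq0 : 0 < q) (hq1 : q < 1) {β γ : ℝ} (hβ : 0 < β) (hγ : 0 < γ) :
    qGamma q β / qGamma q γ = qPochhammerInf q γ / qPochhammerInf q β * (1 - q) ^ (γ - β) := by
  have := qPochhammerInf_pos hq0 hq1 hβ
  have := qPochhammerInf_pos hq0 hq1 hγ
  have := qPochhammerInf_pos hq0 hq1 one_pos
  rw [qGamma_eq_qPochhammerInf hq0 hq1 hβ, qGamma_eq_qPochhammerInf hq0 hq1 hγ,
    show γ - β = (1 - β) - (1 - γ) by ring,
    Real.rpow_sub (by linarith : 0 < 1 - q) (1 - β) (1 - γ)]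
  field_simp

lemma summable_rpow_mul_div_qGamma (hq0 : 0 < q) (hq1 : q < 1) {α β t : ℝ} (hα : 0 < α)
    (hβ : 0 < β) (ht0 : 0 ≤ t) (ht : t * (1 - q) < 1) :
    Summable fun k : ℕ => t ^ ((k : ℝ) * α) / qGamma q ((k : ℝ) * α + β) := by
  have h1q : 0 < 1 - q := by linarith
  have hr : (t * (1 - q)) ^ α < 1 := Real.rpow_lt_one (by positivity) ht hα
  have hpos (k : ℕ) : 0 < (k : ℝ) * α + β := by positivity
  refine Summable.of_nonneg_of_le
    (fun k => div_nonneg (by positivity) (qGamma_pos hq0 hq1 (hpos k)).le) (fun k => ?_)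
    ((summable_geometric_of_lt_one (by positivity) hr).mul_left
      ((qPochhammerInf q 1)⁻¹ * (1 - q) ^ (β - 1)))
  have hsplit : (1 - q) ^ ((k : ℝ) * α + β - 1) = (1 - q) ^ ((k : ℝ) * α) * (1 - q) ^ (β - 1) := by
    rw [← Real.rpow_add h1q]; ring_nf
  calc t ^ ((k : ℝ) * α) / qGamma q ((k : ℝ) * α + β)
      ≤ t ^ ((k : ℝ) * α) * ((qPochhammerInf q 1)⁻¹ * (1 - q) ^ ((k : ℝ) * α + β - 1)) :=
        mul_le_mul_of_nonneg_left (inv_qGamma_le hq0 hq1 (hpos k)) (by positivity)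
    _ = (qPochhammerInf q 1)⁻¹ * (1 - q) ^ (β - 1) * (t * (1 - q)) ^ ((k : ℝ) * α) := by
        rw [hsplit, Real.mul_rpow ht0 h1q.le]; ring
    _ = (qPochhammerInf q 1)⁻¹ * (1 - q) ^ (β - 1) * ((t * (1 - q)) ^ α) ^ k := by
        rw [mul_comm (k : ℝ), Real.rpow_mul_natCast (by positivity)]

lemma tendsto_qGamma_div_qGamma_add (hq0 : 0 < q) (hq1 : q < 1) (α : ℝ) {ι : Type*}
    {l : Filter ι} {f : ι → ℝ} (hf : Tendsto f l atTop) :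
    Tendsto (fun x => qGamma q (f x) / qGamma q (f x + α)) l (𝓝 ((1 - q) ^ α)) := by
  have hfα : Tendsto (fun x => f x + α) l atTop := tendsto_atTop_add_const_right _ α hf
  have hP := ((tendsto_qPochhammerInf_atTop hq0 hq1).comp hfα).div
    ((tendsto_qPochhammerInf_atTop hq0 hq1).comp hf) one_ne_zero
  have hlim := hP.mul_const ((1 - q) ^ α)
  rw [div_one, one_mul] at hlim
  refine hlim.congr' ?_
  filter_upwards [hf.eventually_gt_atTop 0, hfα.eventually_gt_atTop 0] with x hx hxα
  rw [qGamma_div_qGamma hq0 hq1 hx hxα, add_sub_cancel_left]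
  rfl

end qGamma

theorem qML_series_convergence_general (q α : ℝ) (hq0 : 0 < q) (hq1 : q < 1)
    (hα0 : 0 < α) :
    (∀ t : ℝ, 0 < t → t ≤ 1 →
      Summable fun k : ℕ => t ^ ((k : ℝ) * α) / qGamma q ((k : ℝ) * α + 1)) ∧
    Tendsto (fun k : ℕ => qGamma q (((k : ℝ) - 1) * α + 1) / qGamma q ((k : ℝ) * α + 1))
      atTop (𝓝 ((1 - q) ^ α)) ∧
    (1 - q) ^ α < 1 := by
  have hlt : (1 - q) ^ α < 1 := Real.rpow_lt_one (by linarith) (by linarith) hα0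
  refine ⟨fun t ht0 ht1 => ?_, ?_, hlt⟩
  · refine summable_rpow_mul_div_qGamma hq0 hq1 hα0 one_pos ht0.le ?_
    nlinarith
  · have hf : Tendsto (fun k : ℕ => ((k : ℝ) - 1) * α + 1) atTop atTop :=
      (tendsto_atTop_add_const_right _ (1 - α)
        (tendsto_natCast_atTop_atTop.atTop_mul_const hα0)).congr fun k => by ring
    simpa only [show ∀ k : ℕ, ((k : ℝ) - 1) * α + 1 + α = (k : ℝ) * α + 1 from fun k => by ring]
      using tendsto_qGamma_div_qGamma_add hq0 hq1 α hf

theorem qML_series_convergence (q α : ℝ) (hq0 : 0 < q) (hq1 : q < 1)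
    (hα0 : 0 < α) (hα1 : α ≤ 1) :
    (∀ t : ℝ, 0 < t → t ≤ 1 →
      Summable fun k : ℕ => t ^ ((k : ℝ) * α) / qGamma q ((k : ℝ) * α + 1)) ∧
    Tendsto (fun k : ℕ => qGamma q (((k : ℝ) - 1) * α + 1) / qGamma q ((k : ℝ) * α + 1))
      atTop (𝓝 ((1 - q) ^ α)) ∧
    (1 - q) ^ α < 1 :=
  qML_series_convergence_general q α hq0 hq1 hα0
end
end
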